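/- Let α_q ∈ [0,1) for each q, let p* ∈ 𝒫 be a Nash equilibrium of the game 𝒢, and let p^{(n)} be the smoothed simultaneous IWFA sequence started at some p^{(0)} ∈ 𝒫^eff. Then for all n ≥ 0: ‖p^{(n+1)} − p*‖₂ ≤ (max_q α_q + (1 − min_q α_q)·max_{k∈{1,…,N}} ‖H(k)‖₂) · ‖p^{(n)} − p*‖₂, where ‖H(k)‖₂ = ρ(H(k)ᵀH(k))^{1/2} is the spectral norm and the norms on 𝒫 are Euclidean norms on ℝ^{QN}. -/

import Mathlib

open Finset
open scoped Classical

noncomputable section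

/-- Squared Euclidean distance between two vectors of `ℝ^N`. -/
def dsq {N : ℕ} (x y : Fin N → ℝ) : ℝ := ∑ k, (x k - y k) ^ 2

/-- The admissible strategy set with per-carrier caps `pmax`. -/
def stratSet {N : ℕ} (pmax : Fin N → ℝ) : Set (Fin N → ℝ) :=
  {p | (1 / (N : ℝ)) * ∑ k, p k = 1 ∧ ∀ k, 0 ≤ p k ∧ p k ≤ pmax k}

/-- `x` is a Euclidean projection of `z` onto `S` (a minimizer of the Euclidean distance). -/
def IsProjOn {N : ℕ} (S : Set (Fin N → ℝ)) (z x : Fin N → ℝ) : Prop :=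
  x ∈ S ∧ ∀ y ∈ S, dsq x z ≤ dsq y z

/-- The interference-plus-noise-to-signal vector `insr_q(p_{-q})`
(it only depends on the components `p r` for `r ≠ q`). -/
def insr {N Q : ℕ} (H : Fin Q → Fin Q → Fin N → ℝ) (Γ : Fin Q → ℝ)
    (q : Fin Q) (p : Fin Q → Fin N → ℝ) : Fin N → ℝ :=
  fun k => Γ q * (1 + ∑ r ∈ Finset.univ.erase q, H r q k * p r k) / H q q k

/-- `WF` is a waterfilling operator: whenever the other users' strategies are feasible,
`WF q p` is the Euclidean projection of `-insr_q(p_{-q})` onto user `q`'s strategy set. -/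
def IsWF {N Q : ℕ} (H : Fin Q → Fin Q → Fin N → ℝ) (Γ : Fin Q → ℝ)
    (pmax : Fin Q → Fin N → ℝ)
    (WF : Fin Q → (Fin Q → Fin N → ℝ) → Fin N → ℝ) : Prop :=
  ∀ q (p : Fin Q → Fin N → ℝ), (∀ r, r ≠ q → p r ∈ stratSet (pmax r)) →
    IsProjOn (stratSet (pmax q)) (fun k => -insr H Γ q p k) (WF q p)

/-- The rate `R_q(p)` of user `q`. -/
def rate {N Q : ℕ} (H : Fin Q → Fin Q → Fin N → ℝ) (Γ : Fin Q → ℝ)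
    (q : Fin Q) (p : Fin Q → Fin N → ℝ) : ℝ :=
  (1 / (N : ℝ)) * ∑ k, Real.log (1 + H q q k * p q k /
      (Γ q * (1 + ∑ r ∈ Finset.univ.erase q, H r q k * p r k)))

/-- `pstar` is a Nash equilibrium of the rate game `𝒢`. -/
def IsNE {N Q : ℕ} (H : Fin Q → Fin Q → Fin N → ℝ) (Γ : Fin Q → ℝ)
    (pmax : Fin Q → Fin N → ℝ) (pstar : Fin Q → Fin N → ℝ) : Prop :=
  (∀ q, pstar q ∈ stratSet (pmax q)) ∧
    ∀ q, ∀ x ∈ stratSet (pmax q),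
      rate H Γ q (Function.update pstar q x) ≤ rate H Γ q pstar

/-- The set `D_q` of carriers that user `q` may use in some best response. -/
def Dset {N Q : ℕ} (pmax : Fin Q → Fin N → ℝ)
    (WF : Fin Q → (Fin Q → Fin N → ℝ) → Fin N → ℝ) (q : Fin Q) : Set (Fin N) :=
  {k | ∃ p : Fin Q → Fin N → ℝ,
    (∀ r, r ≠ q → p r ∈ stratSet (pmax r)) ∧ WF q p k ≠ 0}

/-- `max_{k ∈ D_q ∩ D_r} |H_rq(k)|² / |H_qq(k)|²`, with the convention that it is `0`
when `D_q ∩ D_r = ∅` (via `Real.sSup_empty`). -/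
def maxRatio {N Q : ℕ} (H : Fin Q → Fin Q → Fin N → ℝ) (pmax : Fin Q → Fin N → ℝ)
    (WF : Fin Q → (Fin Q → Fin N → ℝ) → Fin N → ℝ) (q r : Fin Q) : ℝ :=
  sSup {x : ℝ | ∃ k : Fin N,
    (k ∈ Dset pmax WF q ∧ k ∈ Dset pmax WF r) ∧ x = H r q k / H q q k}

/-- The matrix `H^max`. -/
def Hmax {N Q : ℕ} (H : Fin Q → Fin Q → Fin N → ℝ) (Γ : Fin Q → ℝ)
    (pmax : Fin Q → Fin N → ℝ)
    (WF : Fin Q → (Fin Q → Fin N → ℝ) → Fin N → ℝ) : Matrix (Fin Q) (Fin Q) ℝ :=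
  Matrix.of fun q r => if q = r then 0 else Γ q * maxRatio H pmax WF q r

/-- The matrix `H(k)`. -/
def Hmat {N Q : ℕ} (H : Fin Q → Fin Q → Fin N → ℝ) (Γ : Fin Q → ℝ)
    (pmax : Fin Q → Fin N → ℝ)
    (WF : Fin Q → (Fin Q → Fin N → ℝ) → Fin N → ℝ) (k : Fin N) :
    Matrix (Fin Q) (Fin Q) ℝ :=
  Matrix.of fun q r =>
    if q ≠ r ∧ k ∈ Dset pmax WF q ∧ k ∈ Dset pmax WF r then
      Γ q * H r q k / H q q k
    else 0

/-- The spectral radius of a real square matrix: the maximum modulus of its complex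
eigenvalues (the roots of its characteristic polynomial over `ℂ`). -/
def specRad {n : ℕ} (A : Matrix (Fin n) (Fin n) ℝ) : ℝ :=
  sSup {x : ℝ | ∃ μ : ℂ,
    ((A.map (fun a => (a : ℂ))).charpoly).IsRoot μ ∧ x = ‖μ‖}

/-- The spectral norm `‖A‖₂ = ρ(AᵀA)^{1/2}` of a real square matrix. -/
def specNorm {n : ℕ} (A : Matrix (Fin n) (Fin n) ℝ) : ℝ :=
  Real.sqrt (specRad (A.transpose * A))

/-- Euclidean distance between strategy profiles, viewed as vectors of `ℝ^{QN}`. -/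
def profDist {N Q : ℕ} (p p' : Fin Q → Fin N → ℝ) : ℝ :=
  Real.sqrt (∑ q, ∑ k, (p q k - p' q k) ^ 2)

/-- The effective strategy set `𝒫_q^eff`. -/
def effSet {N Q : ℕ} (pmax : Fin Q → Fin N → ℝ)
    (WF : Fin Q → (Fin Q → Fin N → ℝ) → Fin N → ℝ) (q : Fin Q) : Set (Fin N → ℝ) :=
  {p | p ∈ stratSet (pmax q) ∧ ∀ k, k ∉ Dset pmax WF q → p k = 0}

/-- The gradient `∇_q R_q(p)` of the rate of user `q` with respect to its own powers. -/
def gradR {N Q : ℕ} (H : Fin Q → Fin Q → Fin N → ℝ) (Γ : Fin Q → ℝ)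
    (q : Fin Q) (p : Fin Q → Fin N → ℝ) : Fin N → ℝ :=
  fun k => (1 / (N : ℝ)) * H q q k /
    (Γ q * (1 + ∑ r ∈ Finset.univ.erase q, H r q k * p r k) + H q q k * p q k)

/-- `x` is a projection of `z` onto `S` with respect to the quadratic form of the
(symmetric positive definite) matrix `G`, i.e. a minimizer of `(x-z)ᵀ G (x-z)` over `S`. -/
def IsGProj {N : ℕ} (G : Matrix (Fin N) (Fin N) ℝ) (S : Set (Fin N → ℝ))
    (z x : Fin N → ℝ) : Prop :=
  x ∈ S ∧ ∀ y ∈ S,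
    dotProduct (fun i => x i - z i) (G.mulVec (fun i => x i - z i)) ≤
      dotProduct (fun i => y i - z i) (G.mulVec (fun i => y i - z i))

/-!
The Nash equilibrium is a fixed point of waterfilling: `pstar q` maximizes
`∑ₖ log (σₖ + xₖ)` over `𝒫_q`, with `σ = insr_q(pstar)`; moving power `ε` from a used carrier `l`
to an unsaturated carrier `j` cannot help, which gives the water-level inequality
`σₗ + xₗ ≤ σⱼ + xⱼ`. As all strategies carry the same total power, these inequalities add up to
`⟪x + σ, y - x⟫ ≥ 0` for every `y ∈ 𝒫_q`, the variational inequality characterizing the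
projection of `-σ` onto `𝒫_q`.

Projections onto convex sets are firmly nonexpansive, so `‖WF_q(p) - pstar_q‖` is at most the
norm of `insr_q(pstar) - insr_q(p)` restricted to `D_q` (both sides vanish off `D_q` because the
iterates stay in `𝒫^eff`). On each carrier `k` that restricted difference is dominated entrywise
by `H(k) |p(k) - pstar(k)|`, hence `‖WF(p) - pstar‖ ≤ maxₖ ‖H(k)‖₂ ‖p - pstar‖`. The smoothed
step is a per-user convex combination of `p` and `WF(p)`, and the triangle inequality in
`ℝ^{QN}` finishes the bound.
-/

open Matrix Filter Topology

lemma nonneg_of_forall_nonneg_add_mul {a b c : ℝ} (hc : 0 < c)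
    (h : ∀ t, 0 < t → t ≤ c → 0 ≤ a + t * b) : 0 ≤ a := by
  have hlim : Tendsto (fun t => a + t * b) (𝓝[>] 0) (𝓝 a) := by
    have : Continuous fun t : ℝ => a + t * b := by fun_prop
    simpa using (this.tendsto 0).mono_left nhdsWithin_le_nhds
  refine ge_of_tendsto hlim ?_
  filter_upwards [Ioc_mem_nhdsGT hc] with t ht using h t ht.1 ht.2

section DotProduct

variable {ι : Type*} [Fintype ι]

lemma dotProduct_self_nonneg (v : ι → ℝ) : 0 ≤ v ⬝ᵥ v :=
  Finset.sum_nonneg fun i _ => mul_self_nonneg (v i)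

lemma dotProduct_self_le_of_le_dotProduct {v w : ι → ℝ} (h : v ⬝ᵥ v ≤ v ⬝ᵥ w) :
    v ⬝ᵥ v ≤ w ⬝ᵥ w := by
  have hcs : (v ⬝ᵥ w) ^ 2 ≤ (v ⬝ᵥ v) * (w ⬝ᵥ w) := by
    simpa only [dotProduct, sq] using Finset.sum_mul_sq_le_sq_mul_sq Finset.univ v w
  have hv := dotProduct_self_nonneg v
  have hw := dotProduct_self_nonneg w
  nlinarith

end DotProduct

section Projection

variable {N : ℕ} {S : Set (Fin N → ℝ)} {x x' y z z' : Fin N → ℝ}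

lemma dsq_eq_dotProduct (x y : Fin N → ℝ) : dsq x y = (x - y) ⬝ᵥ (x - y) := by
  simp [dsq, dotProduct, sq]

lemma IsProjOn.dotProduct_nonneg (hS : Convex ℝ S) (h : IsProjOn S z x) (hy : y ∈ S) :
    0 ≤ (x - z) ⬝ᵥ (y - x) := by
  have hsegment : ∀ t, 0 < t → t ≤ 1 →
      0 ≤ 2 * ((x - z) ⬝ᵥ (y - x)) + t * ((y - x) ⬝ᵥ (y - x)) := by
    intro t ht0 ht1
    have hmin := h.2 _ (hS.add_smul_sub_mem h.1 hy ⟨ht0.le, ht1⟩)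
    rw [dsq_eq_dotProduct, dsq_eq_dotProduct, show x + t • (y - x) - z = (x - z) + t • (y - x)
      by abel] at hmin
    simp only [add_dotProduct, dotProduct_add, smul_dotProduct, dotProduct_smul, smul_eq_mul,
      dotProduct_comm (y - x) (x - z)] at hmin
    nlinarith
  linarith [nonneg_of_forall_nonneg_add_mul one_pos hsegment]

lemma isProjOn_of_dotProduct_nonneg (hx : x ∈ S) (h : ∀ y ∈ S, 0 ≤ (x - z) ⬝ᵥ (y - x)) :
    IsProjOn S z x := by
  refine ⟨hx, fun y hy => ?_⟩
  rw [dsq_eq_dotProduct, dsq_eq_dotProduct, show y - z = (y - x) + (x - z) by abel]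
  simp only [add_dotProduct, dotProduct_add, dotProduct_comm (y - x) (x - z)]
  nlinarith [h y hy, dotProduct_self_nonneg (y - x)]

lemma IsProjOn.dotProduct_self_sub_le (hS : Convex ℝ S) (h : IsProjOn S z x)
    (h' : IsProjOn S z' x') : (x - x') ⬝ᵥ (x - x') ≤ (x - x') ⬝ᵥ (z - z') := by
  have v := h.dotProduct_nonneg hS h'.1
  have v' := h'.dotProduct_nonneg hS h.1
  rw [show x' - x = -(x - x') by abel, dotProduct_neg] at v
  rw [show x - z = (x - x') - (z - z') + (x' - z') by abel, add_dotProduct, sub_dotProduct,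
    dotProduct_comm (z - z')] at v
  linarith

lemma IsProjOn.unique (hS : Convex ℝ S) (h : IsProjOn S z x) (h' : IsProjOn S z x') :
    x = x' := by
  have := h.dotProduct_self_sub_le hS h'
  rw [sub_self, dotProduct_zero] at this
  exact sub_eq_zero.mp (dotProduct_self_eq_zero.mp (le_antisymm this (dotProduct_self_nonneg _)))

end Projection

section StrategySet

variable {N : ℕ} {pm x y : Fin N → ℝ}

lemma convex_stratSet (pm : Fin N → ℝ) : Convex ℝ (stratSet pm) := by
  rintro x ⟨hx1, hx2⟩ y ⟨hy1, hy2⟩ a b ha hb hab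
  refine ⟨?_, fun k => ⟨?_, ?_⟩⟩
  · simp only [Pi.add_apply, Pi.smul_apply, smul_eq_mul, Finset.sum_add_distrib,
      ← Finset.mul_sum]
    linear_combination a * hx1 + b * hy1 + hab
  · have := (hx2 k).1; have := (hy2 k).1
    simp only [Pi.add_apply, Pi.smul_apply, smul_eq_mul]; positivity
  · simp only [Pi.add_apply, Pi.smul_apply, smul_eq_mul]
    linear_combination mul_le_mul_of_nonneg_left (hx2 k).2 ha +
      mul_le_mul_of_nonneg_left (hy2 k).2 hb + pm k * hab

lemma sum_eq_of_mem_stratSet (hx : x ∈ stratSet pm) (hy : y ∈ stratSet pm) :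
    ∑ k, y k = ∑ k, x k :=
  mul_left_cancel₀ (left_ne_zero_of_mul_eq_one hx.1) (hy.1.trans hx.1.symm)

end StrategySet

lemma sum_mul_nonneg_of_sum_eq_zero {ι : Type*} [Fintype ι] {w d : ι → ℝ}
    (hd : ∑ i, d i = 0) (hw : ∀ j l, 0 < d j → d l < 0 → w l ≤ w j) :
    0 ≤ ∑ i, w i * d i := by
  by_cases hpos : ∃ j, 0 < d j
  · obtain ⟨j, hj, hmin⟩ := (Finset.univ.filter fun i => 0 < d i).exists_min_image w
      (let ⟨j, hj⟩ := hpos; ⟨j, by simpa using hj⟩)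
    rw [Finset.mem_filter] at hj
    have hshift : ∑ i, w i * d i = ∑ i, (w i - w j) * d i := by
      simp only [sub_mul, Finset.sum_sub_distrib, ← Finset.mul_sum, hd, mul_zero, sub_zero]
    rw [hshift]
    refine Finset.sum_nonneg fun i _ => ?_
    rcases lt_trichotomy (d i) 0 with hi | hi | hi
    · exact mul_nonneg_of_nonpos_of_nonpos (sub_nonpos.2 (hw j i hj.2 hi)) hi.le
    · simp [hi]
    · exact mul_nonneg (sub_nonneg.2 (hmin i (by simpa using hi))) hi.le
  · simp only [not_exists, not_lt] at hpos
    have hzero := (Finset.sum_eq_zero_iff_of_nonpos fun i _ => hpos i).mp hd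
    simp [hzero]

section Waterfilling

variable {N : ℕ} {pm σ x : Fin N → ℝ}

lemma add_smul_single_sub_single_mem_stratSet (hx : x ∈ stratSet pm) {j l : Fin N}
    (hjl : j ≠ l) {ε : ℝ} (hε : 0 ≤ ε) (hεj : ε ≤ pm j - x j) (hεl : ε ≤ x l) :
    x + ε • (Pi.single j 1 - Pi.single l 1) ∈ stratSet pm := by
  refine ⟨?_, fun k => ?_⟩
  · have hsum : ∑ k, (x + ε • (Pi.single j 1 - Pi.single l 1) : Fin N → ℝ) k = ∑ k, x k := by
      simp [Finset.sum_add_distrib, ← Finset.mul_sum, Finset.sum_sub_distrib]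
    rw [hsum]; exact hx.1
  · rcases eq_or_ne k j with rfl | hkj
    · simp only [Pi.add_apply, Pi.smul_apply, Pi.sub_apply, Pi.single_eq_same,
        Pi.single_eq_of_ne hjl, smul_eq_mul]
      constructor <;> linarith [(hx.2 k).1]
    rcases eq_or_ne k l with rfl | hkl
    · simp only [Pi.add_apply, Pi.smul_apply, Pi.sub_apply, Pi.single_eq_same,
        Pi.single_eq_of_ne hkj, smul_eq_mul]
      constructor <;> linarith [(hx.2 k).2]
    · simpa [hkj, hkl] using hx.2 k

lemma le_of_isMaxOn_sum_log (hσ : ∀ k, 0 < σ k) (hx : x ∈ stratSet pm)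
    (hmax : IsMaxOn (fun y => ∑ k, Real.log (σ k + y k)) (stratSet pm) x)
    {j l : Fin N} (hj : x j < pm j) (hl : 0 < x l) : σ l + x l ≤ σ j + x j := by
  rcases eq_or_ne j l with rfl | hjl
  · exact le_rfl
  have hexchange : ∀ ε, 0 < ε → ε ≤ min (pm j - x j) (x l) →
      0 ≤ σ j + x j - (σ l + x l) + ε * 1 := by
    intro ε hε hεc
    set y := x + ε • (Pi.single j 1 - Pi.single l 1) with hy
    have hyS : y ∈ stratSet pm := add_smul_single_sub_single_mem_stratSet hx hjl hε.le
      (hεc.trans (min_le_left _ _)) (hεc.trans (min_le_right _ _))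
    have hyk : ∀ k, k ≠ j → k ≠ l → y k = x k := by
      intro k hkj hkl; simp [hy, hkj, hkl]
    have hyj : y j = x j + ε := by simp [hy, hjl]
    have hyl : y l = x l - ε := by simp [hy, hjl.symm, sub_eq_add_neg]
    have hle : ∑ k, (Real.log (σ k + y k) - Real.log (σ k + x k)) ≤ 0 := by
      rw [Finset.sum_sub_distrib, sub_nonpos]; exact isMaxOn_iff.mp hmax y hyS
    rw [Fintype.sum_eq_add j l hjl fun k hk => by rw [hyk k hk.1 hk.2, sub_self], hyj,
      hyl] at hle
    have hA := hσ j; have hB := hσ l; have hxj := (hx.2 j).1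
    have hεl : ε ≤ x l := hεc.trans (min_le_right _ _)
    have hprod : (σ j + (x j + ε)) * (σ l + (x l - ε)) ≤ (σ j + x j) * (σ l + x l) := by
      rw [← Real.log_le_log_iff (by nlinarith) (by positivity), Real.log_mul (by linarith)
        (by linarith), Real.log_mul (by linarith) (by linarith)]
      linarith
    nlinarith
  linarith [nonneg_of_forall_nonneg_add_mul (lt_min (sub_pos.2 hj) hl) hexchange]

lemma isProjOn_neg_of_isMaxOn_sum_log (hσ : ∀ k, 0 < σ k) (hx : x ∈ stratSet pm)
    (hmax : IsMaxOn (fun y => ∑ k, Real.log (σ k + y k)) (stratSet pm) x) :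
    IsProjOn (stratSet pm) (-σ) x := by
  refine isProjOn_of_dotProduct_nonneg hx fun y hy => ?_
  rw [sub_neg_eq_add]
  refine sum_mul_nonneg_of_sum_eq_zero ?_ fun j l hj hl => ?_
  · simp [Finset.sum_sub_distrib, sum_eq_of_mem_stratSet hx hy]
  · simp only [Pi.add_apply, Pi.sub_apply, sub_pos, sub_neg] at hj hl ⊢
    rw [add_comm (x l), add_comm (x j)]
    exact le_of_isMaxOn_sum_log hσ hx hmax (hj.trans_le (hy.2 j).2) ((hy.2 l).1.trans_lt hl)

end Waterfilling

section Spectral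

variable {n : ℕ}

lemma specRad_nonneg (A : Matrix (Fin n) (Fin n) ℝ) : 0 ≤ specRad A :=
  Real.sSup_nonneg fun _ ⟨μ, _, hx⟩ => hx ▸ norm_nonneg μ

lemma le_specRad {A : Matrix (Fin n) (Fin n) ℝ} {μ : ℂ}
    (hμ : ((A.map (fun a => (a : ℂ))).charpoly).IsRoot μ) : ‖μ‖ ≤ specRad A := by
  have hfin : {z : ℂ | ((A.map (fun a => (a : ℂ))).charpoly).IsRoot z}.Finite :=
    Polynomial.finite_setOfPred_isRoot (Matrix.charpoly_monic _).ne_zero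
  refine le_csSup ((hfin.image norm).bddAbove.mono ?_) ⟨μ, hμ, rfl⟩
  rintro _ ⟨ν, hν, rfl⟩
  exact ⟨ν, hν, rfl⟩

lemma Matrix.IsHermitian.eigenvalues_le_specRad {B : Matrix (Fin n) (Fin n) ℝ}
    (hB : B.IsHermitian) (i : Fin n) : hB.eigenvalues i ≤ specRad B := by
  refine (le_abs_self _).trans (le_of_eq_of_le (Complex.norm_real _).symm (le_specRad ?_))
  rw [show (B.map fun a => (a : ℂ)) = B.map Complex.ofRealHom from rfl,
    Matrix.charpoly_map B Complex.ofRealHom, hB.charpoly_eq, Polynomial.IsRoot,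
    Polynomial.eval_map, Polynomial.eval₂_finsetProd]
  exact Finset.prod_eq_zero (Finset.mem_univ i) (by simp)

lemma Matrix.IsHermitian.posSemidef_smul_one_sub {m : Type*} [Fintype m] [DecidableEq m]
    {B : Matrix m m ℝ}
    (hB : B.IsHermitian) {c : ℝ} (hc : ∀ i, hB.eigenvalues i ≤ c) : (c • 1 - B).PosSemidef := by
  have hconj : c • 1 - B = Unitary.conjStarAlgAut ℝ _ hB.eigenvectorUnitary
      (diagonal fun i => c - hB.eigenvalues i) := by
    rw [← diagonal_sub, ← smul_one_eq_diagonal, map_sub, map_smul, map_one]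
    conv_lhs => rw [hB.spectral_theorem]
    rfl
  rw [hconj, Unitary.conjStarAlgAut_apply,
    Unitary.isUnit_coe.posSemidef_star_right_conjugate_iff, posSemidef_diagonal_iff]
  exact fun i => sub_nonneg.2 (hc i)

lemma Matrix.IsHermitian.dotProduct_mulVec_le {B : Matrix (Fin n) (Fin n) ℝ}
    (hB : B.IsHermitian) (x : Fin n → ℝ) : x ⬝ᵥ (B *ᵥ x) ≤ specRad B * (x ⬝ᵥ x) := by
  have := (hB.posSemidef_smul_one_sub hB.eigenvalues_le_specRad).dotProduct_mulVec_nonneg x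
  simpa [sub_mulVec, smul_mulVec, dotProduct_sub, dotProduct_smul] using this

lemma mulVec_dotProduct_self_le (A : Matrix (Fin n) (Fin n) ℝ) (x : Fin n → ℝ) :
    (A *ᵥ x) ⬝ᵥ (A *ᵥ x) ≤ specNorm A ^ 2 * (x ⬝ᵥ x) := by
  have hB : (Aᵀ * A).IsHermitian := by simpa using isHermitian_conjTranspose_mul_self A
  rw [specNorm, Real.sq_sqrt (specRad_nonneg _)]
  calc (A *ᵥ x) ⬝ᵥ (A *ᵥ x) = x ⬝ᵥ ((Aᵀ * A) *ᵥ x) := by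
        rw [← mulVec_mulVec, dotProduct_mulVec x Aᵀ, vecMul_transpose]
    _ ≤ _ := hB.dotProduct_mulVec_le x

end Spectral

section Game

variable {N Q : ℕ} {H : Fin Q → Fin Q → Fin N → ℝ} {Γ : Fin Q → ℝ}
  {pmax : Fin Q → Fin N → ℝ} {WF : Fin Q → (Fin Q → Fin N → ℝ) → Fin N → ℝ}
  {pstar : Fin Q → Fin N → ℝ}

lemma insr_pos (hH : ∀ r q k, 0 ≤ H r q k) (hHqq : ∀ q k, 0 < H q q k) (hΓ : ∀ q, 0 < Γ q)
    {q : Fin Q} {p : Fin Q → Fin N → ℝ} (hp : ∀ r, r ≠ q → ∀ k, 0 ≤ p r k) (k : Fin N) :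
    0 < insr H Γ q p k := by
  have hI : 0 ≤ ∑ r ∈ Finset.univ.erase q, H r q k * p r k :=
    Finset.sum_nonneg fun r hr => mul_nonneg (hH r q k) (hp r (Finset.ne_of_mem_erase hr) k)
  exact div_pos (mul_pos (hΓ q) (by linarith)) (hHqq q k)

lemma rate_update {q : Fin Q} {p : Fin Q → Fin N → ℝ} {y : Fin N → ℝ}
    (hσ : ∀ k, 0 < insr H Γ q p k) (hy : ∀ k, 0 ≤ y k) :
    rate H Γ q (Function.update p q y) =
      (1 / (N : ℝ)) * ∑ k, (Real.log (insr H Γ q p k + y k) - Real.log (insr H Γ q p k)) := by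
  rw [rate]
  congr 1
  refine Finset.sum_congr rfl fun k _ => ?_
  have hothers : ∑ r ∈ Finset.univ.erase q, H r q k * Function.update p q y r k =
      ∑ r ∈ Finset.univ.erase q, H r q k * p r k :=
    Finset.sum_congr rfl fun r hr => by rw [Function.update_of_ne (Finset.ne_of_mem_erase hr)]
  rw [Function.update_self, hothers, ← Real.log_div (by linarith [hσ k, hy k]) (hσ k).ne',
    add_div, div_self (hσ k).ne', insr, div_div_eq_mul_div, mul_comm (y k)]

lemma IsNE.isMaxOn (hH : ∀ r q k, 0 ≤ H r q k) (hHqq : ∀ q k, 0 < H q q k)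
    (hΓ : ∀ q, 0 < Γ q) (hNE : IsNE H Γ pmax pstar) (q : Fin Q) :
    IsMaxOn (fun y => ∑ k, Real.log (insr H Γ q pstar k + y k)) (stratSet (pmax q))
      (pstar q) := by
  have hσ := insr_pos hH hHqq hΓ (q := q) fun r _ k => ((hNE.1 r).2 k).1
  have hN : 0 < 1 / (N : ℝ) :=
    lt_of_le_of_ne (by positivity) (left_ne_zero_of_mul_eq_one (hNE.1 q).1).symm
  refine isMaxOn_iff.mpr fun y hy => ?_
  have hle := hNE.2 q y hy
  conv_rhs at hle => rw [← Function.update_eq_self q pstar]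
  rw [rate_update hσ fun k => (hy.2 k).1, rate_update hσ fun k => ((hNE.1 q).2 k).1,
    mul_le_mul_iff_right₀ hN, Finset.sum_sub_distrib, Finset.sum_sub_distrib] at hle
  simpa using hle

lemma IsNE.isProjOn (hH : ∀ r q k, 0 ≤ H r q k) (hHqq : ∀ q k, 0 < H q q k)
    (hΓ : ∀ q, 0 < Γ q) (hNE : IsNE H Γ pmax pstar) (q : Fin Q) :
    IsProjOn (stratSet (pmax q)) (-insr H Γ q pstar) (pstar q) :=
  isProjOn_neg_of_isMaxOn_sum_log (insr_pos hH hHqq hΓ fun r _ k => ((hNE.1 r).2 k).1)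
    (hNE.1 q) (hNE.isMaxOn hH hHqq hΓ q)

lemma IsNE.wf_eq (hH : ∀ r q k, 0 ≤ H r q k) (hHqq : ∀ q k, 0 < H q q k)
    (hΓ : ∀ q, 0 < Γ q) (hWF : IsWF H Γ pmax WF) (hNE : IsNE H Γ pmax pstar) (q : Fin Q) :
    WF q pstar = pstar q :=
  (hWF q pstar fun r _ => hNE.1 r).unique (convex_stratSet _) (hNE.isProjOn hH hHqq hΓ q)

lemma wf_eq_zero_of_not_mem_Dset {q : Fin Q} {p : Fin Q → Fin N → ℝ}
    (hp : ∀ r, r ≠ q → p r ∈ stratSet (pmax r)) {k : Fin N} (hk : k ∉ Dset pmax WF q) :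
    WF q p k = 0 :=
  not_not.mp fun h => hk ⟨p, hp, h⟩

lemma IsNE.mem_effSet (hNE : IsNE H Γ pmax pstar) {q : Fin Q} (hfix : WF q pstar = pstar q) :
    pstar q ∈ effSet pmax WF q :=
  ⟨hNE.1 q, fun _ hk => hfix ▸ wf_eq_zero_of_not_mem_Dset (fun r _ => hNE.1 r) hk⟩

lemma IsWF.smoothed_mem_effSet (hWF : IsWF H Γ pmax WF) {a : ℝ} (ha0 : 0 ≤ a) (ha1 : a ≤ 1)
    {p : Fin Q → Fin N → ℝ} (hp : ∀ r, p r ∈ effSet pmax WF r) (q : Fin Q) :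
    (fun k => a * p q k + (1 - a) * WF q p k) ∈ effSet pmax WF q := by
  have hfeas : ∀ r, r ≠ q → p r ∈ stratSet (pmax r) := fun r _ => (hp r).1
  refine ⟨convex_stratSet _ (hp q).1 (hWF q p hfeas).1 ha0 (by linarith) (by ring),
    fun k hk => ?_⟩
  simp only [(hp q).2 k hk, wf_eq_zero_of_not_mem_Dset hfeas hk, mul_zero, add_zero]

lemma insr_sub_insr (q : Fin Q) (p p' : Fin Q → Fin N → ℝ) (k : Fin N) :
    insr H Γ q p k - insr H Γ q p' k =
      ∑ r ∈ Finset.univ.erase q, Γ q * H r q k / H q q k * (p r k - p' r k) := by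
  simp only [insr]
  rw [div_sub_div_same, ← mul_sub, add_sub_add_left_eq_sub, ← Finset.sum_sub_distrib,
    Finset.mul_sum, Finset.sum_div]
  exact Finset.sum_congr rfl fun r _ => by ring

lemma abs_insr_sub_le_mulVec (hH : ∀ r q k, 0 ≤ H r q k) (hHqq : ∀ q k, 0 < H q q k)
    (hΓ : ∀ q, 0 < Γ q) {p p' : Fin Q → Fin N → ℝ} {k : Fin N}
    (hpp' : ∀ r, k ∉ Dset pmax WF r → p r k = p' r k) {q : Fin Q} (hq : k ∈ Dset pmax WF q) :
    |insr H Γ q p k - insr H Γ q p' k| ≤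
      (Hmat H Γ pmax WF k *ᵥ fun r => |p r k - p' r k|) q := by
  rw [insr_sub_insr, Matrix.mulVec, dotProduct, ← Finset.sum_erase Finset.univ
    (f := fun r => Hmat H Γ pmax WF k q r * |p r k - p' r k|) (a := q) (by simp [Hmat])]
  refine (Finset.abs_sum_le_sum_abs _ _).trans (Finset.sum_le_sum fun r hr => ?_)
  have hrq := Finset.ne_of_mem_erase hr
  rw [abs_mul, abs_of_nonneg (div_nonneg (mul_nonneg (hΓ q).le (hH r q k)) (hHqq q k).le)]
  by_cases hkr : k ∈ Dset pmax WF r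
  · simp [Hmat, hq, hkr, Ne.symm hrq]
  · simp [hpp' r hkr]

lemma sum_sq_masked_insr_sub_le (hH : ∀ r q k, 0 ≤ H r q k) (hHqq : ∀ q k, 0 < H q q k)
    (hΓ : ∀ q, 0 < Γ q) {p p' : Fin Q → Fin N → ℝ} {k : Fin N}
    (hpp' : ∀ r, k ∉ Dset pmax WF r → p r k = p' r k) :
    ∑ q, (if k ∈ Dset pmax WF q then insr H Γ q p k - insr H Γ q p' k else 0) ^ 2 ≤
      specNorm (Hmat H Γ pmax WF k) ^ 2 * ∑ r, (p r k - p' r k) ^ 2 := by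
  set v : Fin Q → ℝ := fun r => |p r k - p' r k|
  have hentry : ∀ q, (if k ∈ Dset pmax WF q then insr H Γ q p k - insr H Γ q p' k else 0) ^ 2
      ≤ (Hmat H Γ pmax WF k *ᵥ v) q ^ 2 := by
    intro q
    split_ifs with hq
    · exact sq_le_sq.mpr ((abs_insr_sub_le_mulVec hH hHqq hΓ hpp' hq).trans (le_abs_self _))
    · simpa using sq_nonneg _
  calc _ ≤ ∑ q, (Hmat H Γ pmax WF k *ᵥ v) q ^ 2 := Finset.sum_le_sum fun q _ => hentry q
    _ = (Hmat H Γ pmax WF k *ᵥ v) ⬝ᵥ (Hmat H Γ pmax WF k *ᵥ v) := by simp [dotProduct, sq]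
    _ ≤ specNorm (Hmat H Γ pmax WF k) ^ 2 * (v ⬝ᵥ v) := mulVec_dotProduct_self_le _ v
    _ = _ := by simp [v, dotProduct, sq]

lemma sum_sq_wf_sub_le (hH : ∀ r q k, 0 ≤ H r q k) (hHqq : ∀ q k, 0 < H q q k)
    (hΓ : ∀ q, 0 < Γ q) (hWF : IsWF H Γ pmax WF) (hNE : IsNE H Γ pmax pstar)
    {p : Fin Q → Fin N → ℝ} (hp : ∀ r, p r ∈ effSet pmax WF r) (q : Fin Q) :
    ∑ k, (WF q p k - pstar q k) ^ 2 ≤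
      ∑ k, (if k ∈ Dset pmax WF q then insr H Γ q pstar k - insr H Γ q p k else 0) ^ 2 := by
  have hfix := hNE.wf_eq hH hHqq hΓ hWF q
  have hfirm := (hWF q p fun r _ => (hp r).1).dotProduct_self_sub_le (convex_stratSet _)
    (hWF q pstar fun r _ => hNE.1 r)
  rw [hfix] at hfirm
  have hmask : (WF q p - pstar q) ⬝ᵥ
      ((fun k => -insr H Γ q p k) - fun k => -insr H Γ q pstar k) =
      (WF q p - pstar q) ⬝ᵥ
        fun k => if k ∈ Dset pmax WF q then insr H Γ q pstar k - insr H Γ q p k else 0 := by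
    refine Finset.sum_congr rfl fun k _ => ?_
    by_cases hk : k ∈ Dset pmax WF q
    · simp only [hk, if_true, Pi.sub_apply]; ring
    · simp [hk, wf_eq_zero_of_not_mem_Dset (fun r _ => (hp r).1) hk,
        (hNE.mem_effSet hfix).2 k hk]
  simpa only [dotProduct, sq, Pi.sub_apply] using
    dotProduct_self_le_of_le_dotProduct (hfirm.trans_eq hmask)

lemma profDist_wf_le (hH : ∀ r q k, 0 ≤ H r q k) (hHqq : ∀ q k, 0 < H q q k)
    (hΓ : ∀ q, 0 < Γ q) (hWF : IsWF H Γ pmax WF) (hNE : IsNE H Γ pmax pstar)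
    {p : Fin Q → Fin N → ℝ} (hp : ∀ r, p r ∈ effSet pmax WF r) {M : ℝ} (hM0 : 0 ≤ M)
    (hM : ∀ k, specNorm (Hmat H Γ pmax WF k) ≤ M) :
    profDist (fun q => WF q p) pstar ≤ M * profDist p pstar := by
  have hpp' : ∀ k r, k ∉ Dset pmax WF r → pstar r k = p r k := fun k r hk => by
    rw [(hNE.mem_effSet (hNE.wf_eq hH hHqq hΓ hWF r)).2 k hk, (hp r).2 k hk]
  have hsum : ∑ q, ∑ k, (WF q p k - pstar q k) ^ 2 ≤
      M ^ 2 * ∑ q, ∑ k, (p q k - pstar q k) ^ 2 :=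
    calc _ ≤ ∑ q, ∑ k, (if k ∈ Dset pmax WF q then
            insr H Γ q pstar k - insr H Γ q p k else 0) ^ 2 :=
          Finset.sum_le_sum fun q _ => sum_sq_wf_sub_le hH hHqq hΓ hWF hNE hp q
      _ = ∑ k, ∑ q, (if k ∈ Dset pmax WF q then
            insr H Γ q pstar k - insr H Γ q p k else 0) ^ 2 := Finset.sum_comm
      _ ≤ ∑ k, M ^ 2 * ∑ q, (pstar q k - p q k) ^ 2 := Finset.sum_le_sum fun k _ =>
          (sum_sq_masked_insr_sub_le hH hHqq hΓ (hpp' k)).trans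
            (mul_le_mul_of_nonneg_right (pow_le_pow_left₀ (Real.sqrt_nonneg _) (hM k) 2)
              (Finset.sum_nonneg fun q _ => sq_nonneg _))
      _ = M ^ 2 * ∑ q, ∑ k, (p q k - pstar q k) ^ 2 := by
          simp only [← Finset.mul_sum, sub_sq_comm (pstar _ _)]
          rw [Finset.sum_comm]
  rw [profDist, profDist, ← Real.sqrt_sq hM0, ← Real.sqrt_mul (sq_nonneg M)]
  exact Real.sqrt_le_sqrt hsum

end Game

lemma norm_toLp_mul_le {ι : Type*} [Fintype ι] {c : ι → ℝ} {C : ℝ} (hC : 0 ≤ C)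
    (hc : ∀ i, |c i| ≤ C) (x : ι → ℝ) :
    ‖(WithLp.toLp 2 (c * x) : EuclideanSpace ℝ ι)‖ ≤
      C * ‖(WithLp.toLp 2 x : EuclideanSpace ℝ ι)‖ := by
  rw [EuclideanSpace.norm_eq, EuclideanSpace.norm_eq, ← Real.sqrt_sq hC,
    ← Real.sqrt_mul (sq_nonneg C), Finset.mul_sum]
  refine Real.sqrt_le_sqrt (Finset.sum_le_sum fun i _ => ?_)
  simp only [Pi.mul_apply, norm_mul, mul_pow, Real.norm_eq_abs]
  exact mul_le_mul_of_nonneg_right (pow_le_pow_left₀ (abs_nonneg _) (hc i) 2) (sq_nonneg _)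

section Profiles

variable {N Q : ℕ}

lemma profDist_eq_norm (p p' : Fin Q → Fin N → ℝ) :
    profDist p p' = ‖(WithLp.toLp 2 fun i : Fin Q × Fin N => p i.1 i.2 - p' i.1 i.2 :
      EuclideanSpace ℝ (Fin Q × Fin N))‖ := by
  rw [profDist, EuclideanSpace.norm_eq, Fintype.sum_prod_type]
  simp only [Real.norm_eq_abs, sq_abs]

lemma profDist_convex_step_le {α : Fin Q → ℝ} {a b : ℝ} (ha0 : 0 ≤ a) (hb0 : 0 ≤ b)
    (ha : ∀ q, |α q| ≤ a) (hb : ∀ q, |1 - α q| ≤ b) {p w p' pnext : Fin Q → Fin N → ℝ}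
    (hnext : ∀ q, pnext q = fun k => α q * p q k + (1 - α q) * w q k) :
    profDist pnext p' ≤ a * profDist p p' + b * profDist w p' := by
  have hsplit : (WithLp.toLp 2 fun i : Fin Q × Fin N => pnext i.1 i.2 - p' i.1 i.2 :
      EuclideanSpace ℝ (Fin Q × Fin N)) =
      WithLp.toLp 2 ((fun i => α i.1) * fun i => p i.1 i.2 - p' i.1 i.2) +
        WithLp.toLp 2 ((fun i => 1 - α i.1) * fun i => w i.1 i.2 - p' i.1 i.2) := by
    ext i
    simp only [hnext, PiLp.add_apply, Pi.mul_apply]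
    ring
  rw [profDist_eq_norm, profDist_eq_norm, profDist_eq_norm, hsplit]
  have hp := norm_toLp_mul_le (c := fun i : Fin Q × Fin N => α i.1) ha0 (fun i => ha i.1)
    (fun i => p i.1 i.2 - p' i.1 i.2)
  have hw := norm_toLp_mul_le (c := fun i : Fin Q × Fin N => 1 - α i.1) hb0
    (fun i => hb i.1) (fun i => w i.1 i.2 - p' i.1 i.2)
  exact (norm_add_le _ _).trans (add_le_add hp hw)

lemma profDist_smoothed_le {α : Fin Q → ℝ} (hα : ∀ q, 0 ≤ α q ∧ α q < 1)
    {p w p' pnext : Fin Q → Fin N → ℝ}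
    (hnext : ∀ q, pnext q = fun k => α q * p q k + (1 - α q) * w q k) {M : ℝ}
    (hw : profDist w p' ≤ M * profDist p p') :
    profDist pnext p' ≤
      (sSup (Set.range α) + (1 - sInf (Set.range α)) * M) * profDist p p' := by
  have hfin := Set.finite_range α
  have ha0 : 0 ≤ sSup (Set.range α) := Real.sSup_nonneg (by rintro _ ⟨q, rfl⟩; exact (hα q).1)
  have hb0 : 0 ≤ 1 - sInf (Set.range α) :=
    sub_nonneg.2 ((Real.sInf_le_sSup _ hfin.bddBelow hfin.bddAbove).trans
      (Real.sSup_le (by rintro _ ⟨q, rfl⟩; exact (hα q).2.le) zero_le_one))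
  have ha : ∀ q, |α q| ≤ sSup (Set.range α) := fun q =>
    (abs_of_nonneg (hα q).1).trans_le (le_csSup hfin.bddAbove ⟨q, rfl⟩)
  have hb : ∀ q, |1 - α q| ≤ 1 - sInf (Set.range α) := fun q => by
    rw [abs_of_pos (sub_pos.2 (hα q).2)]
    linarith [csInf_le hfin.bddBelow ⟨q, rfl⟩]
  calc profDist pnext p' ≤
        sSup (Set.range α) * profDist p p' + (1 - sInf (Set.range α)) * profDist w p' :=
        profDist_convex_step_le ha0 hb0 ha hb hnext
    _ ≤ sSup (Set.range α) * profDist p p' + (1 - sInf (Set.range α)) * (M * profDist p p') := by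
        gcongr
    _ = _ := by ring

end Profiles

theorem statement17_general {N Q : ℕ}
    (H : Fin Q → Fin Q → Fin N → ℝ) (Γ : Fin Q → ℝ) (pmax : Fin Q → Fin N → ℝ)
    (hH : ∀ r q k, 0 ≤ H r q k) (hHqq : ∀ q k, 0 < H q q k)
    (hΓ : ∀ q, 0 < Γ q)
    (WF : Fin Q → (Fin Q → Fin N → ℝ) → Fin N → ℝ) (hWF : IsWF H Γ pmax WF)
    (α : Fin Q → ℝ) (hα : ∀ q, 0 ≤ α q ∧ α q < 1)
    (pstar : Fin Q → Fin N → ℝ) (hNE : IsNE H Γ pmax pstar)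
    (pseq : ℕ → Fin Q → Fin N → ℝ)
    (h0 : ∀ q, pseq 0 q ∈ effSet pmax WF q)
    (hrec : ∀ n q, pseq (n + 1) q =
      fun k => α q * pseq n q k + (1 - α q) * WF q (pseq n) k) :
    ∀ n, profDist (pseq (n + 1)) pstar ≤
      (sSup (Set.range α) + (1 - sInf (Set.range α)) *
        sSup (Set.range fun k => specNorm (Hmat H Γ pmax WF k))) *
      profDist (pseq n) pstar := by
  have hiter : ∀ n q, pseq n q ∈ effSet pmax WF q := by
    intro n
    induction n with
    | zero => exact h0
    | succ n ih =>
      intro q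
      rw [hrec n q]
      exact hWF.smoothed_mem_effSet (hα q).1 (hα q).2.le ih q
  have hM : ∀ k, specNorm (Hmat H Γ pmax WF k) ≤
      sSup (Set.range fun k => specNorm (Hmat H Γ pmax WF k)) := fun k =>
    le_csSup (Set.finite_range _).bddAbove ⟨k, rfl⟩
  have hM0 : 0 ≤ sSup (Set.range fun k => specNorm (Hmat H Γ pmax WF k)) :=
    Real.sSup_nonneg (by rintro _ ⟨k, rfl⟩; exact Real.sqrt_nonneg _)
  intro n
  exact profDist_smoothed_le hα (hrec n)
    (profDist_wf_le hH hHqq hΓ hWF hNE (hiter n) hM0 hM)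

/-- One-step error bound for the smoothed simultaneous IWFA started in
the effective strategy space, in terms of the memory factors and the largest spectral
norm of the matrices `H(k)`. -/
theorem statement17 {N Q : ℕ} (hN : 1 ≤ N) (hQ : 2 ≤ Q)
    (H : Fin Q → Fin Q → Fin N → ℝ) (Γ : Fin Q → ℝ) (pmax : Fin Q → Fin N → ℝ)
    (hH : ∀ r q k, 0 ≤ H r q k) (hHqq : ∀ q k, 0 < H q q k)
    (hΓ : ∀ q, 0 < Γ q) (hpmax : ∀ q k, 0 ≤ pmax q k)
    (hcap : ∀ q, 1 < (1 / (N : ℝ)) * ∑ k, pmax q k)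
    (WF : Fin Q → (Fin Q → Fin N → ℝ) → Fin N → ℝ) (hWF : IsWF H Γ pmax WF)
    (α : Fin Q → ℝ) (hα : ∀ q, 0 ≤ α q ∧ α q < 1)
    (pstar : Fin Q → Fin N → ℝ) (hNE : IsNE H Γ pmax pstar)
    (pseq : ℕ → Fin Q → Fin N → ℝ)
    (h0 : ∀ q, pseq 0 q ∈ effSet pmax WF q)
    (hrec : ∀ n q, pseq (n + 1) q =
      fun k => α q * pseq n q k + (1 - α q) * WF q (pseq n) k) :
    ∀ n, profDist (pseq (n + 1)) pstar ≤
      (sSup (Set.range α) + (1 - sInf (Set.range α)) *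
        sSup (Set.range fun k => specNorm (Hmat H Γ pmax WF k))) *
      profDist (pseq n) pstar :=
  statement17_general H Γ pmax hH hHqq hΓ WF hWF α hα pstar hNE pseq h0 hrec
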